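/- Define v(n,m,k) = -t(n,m,k)/s(n,m) with s(n,m) = Σ_{i=0}^{m} C(n,i) b^{m-i} and t(n,m,k) = Σ_{i=1}^{k} r_{k+1-i} C(n-i,m), for b > -1 and nonnegative rewards r_i. Then for n > m > 0 and k > 0, with p = s(n-1,m-1)/s(n,m): v(n,m,k) = p·v(n-1,m-1,k) + (1-p)·v(n-1,m,k). -/
import Mathlib


noncomputable def s (b : ℝ) (n m : ℕ) : ℝ :=
  ∑ i ∈ Finset.range (m + 1), (n.choose i : ℝ) * b ^ (m - i)

noncomputable def binom (a : ℤ) (c : ℕ) : ℝ :=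
  if 0 ≤ a then (a.toNat.choose c : ℝ) else 0

noncomputable def t (r : ℕ → ℝ) (n m k : ℕ) : ℝ :=
  ∑ i ∈ Finset.Icc 1 k, r (k + 1 - i) * binom ((n : ℤ) - i) m

/-- v(n,m,k) = -t(n,m,k)/s(n,m). -/
noncomputable def v (b : ℝ) (r : ℕ → ℝ) (n m k : ℕ) : ℝ :=
  -t r n m k / s b n m

lemma s_pascal (b : ℝ) (n m : ℕ) :
    s b (n + 1) (m + 1) = s b n m + s b n (m + 1) := by
  unfold s
  rw [Finset.sum_range_succ' (fun i => (((n+1).choose i : ℝ)) * b ^ (m + 1 - i)) (m + 1),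
      Finset.sum_range_succ' (fun i => ((n.choose i : ℝ)) * b ^ (m + 1 - i)) (m + 1)]
  have h : ∀ i ∈ Finset.range (m + 1),
      (((n+1).choose (i+1) : ℝ)) * b ^ (m + 1 - (i+1)) =
      ((n.choose i : ℝ)) * b ^ (m - i) + ((n.choose (i+1) : ℝ)) * b ^ (m + 1 - (i+1)) := by
    intro i _
    rw [Nat.choose_succ_succ]
    have h2 : m + 1 - (i + 1) = m - i := by omega
    push_cast [h2, Nat.succ_eq_add_one]
    ring
  rw [Finset.sum_congr rfl h, Finset.sum_add_distrib]
  simp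
  ring

lemma s_diag (b : ℝ) (n : ℕ) : s b n n = (1 + b) ^ n := by
  unfold s
  rw [add_pow]
  refine Finset.sum_congr rfl fun i hi => ?_
  simp [mul_comm]

lemma s_pos (b : ℝ) (hb : -1 < b) : ∀ n m : ℕ, m ≤ n → 0 < s b n m := by
  intro n
  induction n with
  | zero =>
    intro m hm
    interval_cases m
    simp [s]
  | succ n ih =>
    intro m hm
    cases m with
    | zero => simp [s]
    | succ m =>
      rcases Nat.lt_or_ge m n with h | h
      · rw [s_pascal]
        exact add_pos (ih m (by omega)) (ih (m + 1) (by omega))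
      · have : m + 1 = n + 1 := by omega
        rw [this, s_diag]
        have : 0 < 1 + b := by linarith
        positivity

lemma binom_pascal (a : ℤ) (m : ℕ) :
    binom a (m + 1) = binom (a - 1) (m + 1) + binom (a - 1) m := by
  unfold binom
  rcases lt_trichotomy a 0 with h | h | h
  · rw [if_neg (by omega), if_neg (by omega), if_neg (by omega)]; ring
  · subst h
    rw [if_pos le_rfl, if_neg (by omega), if_neg (by omega)]
    simp
  · rw [if_pos (by omega), if_pos (by omega), if_pos (by omega)]
    have ha : a.toNat = (a - 1).toNat + 1 := by omega
    rw [ha, Nat.choose_succ_succ]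
    push_cast
    ring

lemma t_pascal (r : ℕ → ℝ) (n m k : ℕ) :
    t r (n + 1) (m + 1) k = t r n m k + t r n (m + 1) k := by
  unfold t
  rw [← Finset.sum_add_distrib]
  refine Finset.sum_congr rfl fun i _ => ?_
  have : ((n : ℤ) + 1) - i = ((n : ℤ) - i) + 1 := by ring
  push_cast
  rw [this]
  have := binom_pascal ((n : ℤ) - i + 1) m
  simp only [add_sub_cancel_right] at this
  rw [this]; ring

/-- Indifference equation for the inspector's equilibrium mixed strategy. -/
theorem stmt_11 (n m k : ℕ) (b : ℝ) (r : ℕ → ℝ)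
    (hb : -1 < b) (hm : 0 < m) (hmn : m < n) (hk : 0 < k)
    (hr : ∀ i, 0 ≤ r i)
    (p : ℝ) (hp : p = s b (n - 1) (m - 1) / s b n m) :
    v b r n m k = p * v b r (n - 1) (m - 1) k + (1 - p) * v b r (n - 1) m k := by
  obtain ⟨n', rfl⟩ : ∃ n', n = n' + 1 := ⟨n - 1, by omega⟩
  obtain ⟨m', rfl⟩ : ∃ m', m = m' + 1 := ⟨m - 1, by omega⟩
  simp only [Nat.add_sub_cancel] at *
  have hs0 : 0 < s b (n' + 1) (m' + 1) := s_pos b hb _ _ (by omega)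
  have hs1 : 0 < s b n' m' := s_pos b hb _ _ (by omega)
  have hs2 : 0 < s b n' (m' + 1) := s_pos b hb _ _ (by omega)
  have hss : s b (n' + 1) (m' + 1) = s b n' m' + s b n' (m' + 1) := s_pascal b n' m'
  have htt : t r (n' + 1) (m' + 1) k = t r n' m' k + t r n' (m' + 1) k := t_pascal r n' m' k
  unfold v
  rw [hp, hss, htt]
  field_simp
  ring
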